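/- arXiv:1105.5954 — 2 statements merged into one kernel-verified Lean document; each statement's English description precedes it below -/
import Mathlib

section
/- Fix a penalty term Π, and suppose that for every ρ > 0 there is a solution z_ρ of the penalised obstacle equation. Then there exists z* ∈ ℝ^N such that z_ρ → z* as ρ → ∞, and z* solves the discrete HJB obstacle problem min{ max_{u∈U}{A_u z* − b_u}, Ãz* − b̃ } = 0. -/
open Matrix Filter

/-- The set `K^o_N`: Z-matrices (non-positive off-diagonal entries) which are
strictly diagonally dominant. -/
def KoMat {N : ℕ} (A : Matrix (Fin N) (Fin N) ℝ) : Prop :=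
  (∀ r s, r ≠ s → A r s ≤ 0) ∧
  ∀ r, ∑ s ∈ Finset.univ.erase r, |A r s| < A r r

/-- A penalty term `Π(y) = (π₁(y₁),…,π_N(y_N))`: each `π i` is continuous,
non-decreasing, identically zero on `(-∞,0]` and strictly positive on `(0,∞)`. -/
structure PenaltyTerm (N : ℕ) where
  π : Fin N → ℝ → ℝ
  cont : ∀ i, Continuous (π i)
  mono : ∀ i, Monotone (π i)
  eq_zero : ∀ i y, y ≤ 0 → π i y = 0
  pos : ∀ i y, 0 < y → 0 < π i y

/-- The penalised obstacle equation
`max_{u∈U}{A_u z - b_u} - ρ · Π(b̃ - Ã z) = 0` (componentwise); the maximum over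
the compact set `U` is expressed via `sSup` of the image. -/
def PenObstEq {N : ℕ} (𝔄 : ℝ → Matrix (Fin N) (Fin N) ℝ) (𝔅 : ℝ → (Fin N → ℝ))
    (U : Set ℝ) (At : Matrix (Fin N) (Fin N) ℝ) (bt : Fin N → ℝ)
    (P : PenaltyTerm N) (ρ : ℝ) (z : Fin N → ℝ) : Prop :=
  ∀ i : Fin N,
    sSup ((fun u => (𝔄 u *ᵥ z - 𝔅 u) i) '' U) -
      ρ * P.π i ((bt - At *ᵥ z) i) = 0

/-! The penalised problem satisfies a comparison principle: at an index where `z₁ - z₂` is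
maximal and positive, the `K^o_N` sign structure makes `max_u (A_u z - b_u)` strictly larger and
the penalty `Π(b̃ - Ã z)` no larger at `z₁` than at `z₂`. Hence `ρ ↦ z_ρ` is nondecreasing and
bounded by a constant supersolution, so it converges. Along the limit `ρ Π(b̃ - Ã z_ρ)` equals the
convergent `max_u (A_u z_ρ - b_u)`, which forces `Ã z* ≥ b̃`; where `Ã z* > b̃` the penalty vanishes
for large `ρ`, so the limit of the max term is `0` there. -/

open Set Topology

variable {N : ℕ}

namespace KoMat

variable {A : Matrix (Fin N) (Fin N) ℝ}

theorem rowSum_pos (hA : KoMat A) (i : Fin N) : 0 < ∑ j, A i j := by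
  have hoff : -∑ j ∈ Finset.univ.erase i, |A i j| ≤ ∑ j ∈ Finset.univ.erase i, A i j := by
    rw [← Finset.sum_neg_distrib]
    exact Finset.sum_le_sum fun j _ => neg_abs_le _
  rw [← Finset.add_sum_erase _ _ (Finset.mem_univ i)]
  linarith [hA.2 i]

theorem mulVec_pos_of_isMax (hA : KoMat A) {d : Fin N → ℝ} {i : Fin N}
    (hmax : ∀ j, d j ≤ d i) (hpos : 0 < d i) : 0 < (A *ᵥ d) i := by
  have hterm : ∀ j, A i j * d i ≤ A i j * d j := by
    intro j
    rcases eq_or_ne j i with rfl | hj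
    · rfl
    · exact mul_le_mul_of_nonpos_left (hmax j) (hA.1 i j hj.symm)
  calc 0 < (∑ j, A i j) * d i := mul_pos (hA.rowSum_pos i) hpos
    _ = ∑ j, A i j * d i := Finset.sum_mul _ _ _
    _ ≤ ∑ j, A i j * d j := Finset.sum_le_sum fun j _ => hterm j
    _ = (A *ᵥ d) i := rfl

theorem eventually_le_mulVec_const (hA : KoMat A) (c : Fin N → ℝ) :
    ∀ᶠ t in atTop, c ≤ A *ᵥ fun _ => t := by
  simp only [Pi.le_def, eventually_all]
  intro i
  have hrow : ∀ t : ℝ, (A *ᵥ fun _ => t) i = t * ∑ j, A i j := fun t => by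
    simp [mulVec, dotProduct, Finset.mul_sum, mul_comm]
  simp only [hrow]
  exact (tendsto_id.atTop_mul_const (hA.rowSum_pos i)).eventually_ge_atTop (c i)

end KoMat

theorem exists_tendsto_atTop_of_monotoneOn_Ici {β α : Type*} [SemilatticeSup β] [Nonempty β]
    [ConditionallyCompleteLattice α] [TopologicalSpace α] [SupConvergenceClass α]
    {f : β → α} {c : β} (hf : MonotoneOn f (Ici c)) (hb : BddAbove (f '' Ici c)) :
    ∃ l, Tendsto f atTop (𝓝 l) := by
  have hmono : Monotone fun x => f (x ⊔ c) := fun x y hxy =>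
    hf le_sup_right le_sup_right (sup_le_sup_right hxy c)
  have hbdd : BddAbove (range fun x => f (x ⊔ c)) :=
    hb.mono (range_subset_iff.2 fun x => mem_image_of_mem f le_sup_right)
  refine ⟨_, (tendsto_atTop_ciSup hmono hbdd).congr' ?_⟩
  filter_upwards [eventually_ge_atTop c] with x hx
  rw [sup_eq_left.2 hx]

/-- Complementarity in the limit: `ρ π(g ρ)` can only stay bounded if `π(lim g) = 0`. -/
theorem min_neg_eq_zero_of_eventually_eq_mul_penalty {π : ℝ → ℝ} (hπc : Continuous π)
    (hπ0 : ∀ y ≤ 0, π y = 0) (hπpos : ∀ y, 0 < y → 0 < π y) {f g : ℝ → ℝ} {L m : ℝ}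
    (hf : Tendsto f atTop (𝓝 L)) (hg : Tendsto g atTop (𝓝 m))
    (hfg : ∀ᶠ ρ in atTop, f ρ = ρ * π (g ρ)) : min L (-m) = 0 := by
  have hπnn : ∀ y, 0 ≤ π y := fun y =>
    (le_or_gt y 0).elim (fun h => (hπ0 y h).ge) fun h => (hπpos y h).le
  have hL : 0 ≤ L := ge_of_tendsto hf <| by
    filter_upwards [hfg, eventually_ge_atTop 0] with ρ hρ hρ0
    exact hρ ▸ mul_nonneg hρ0 (hπnn _)
  have hm : m ≤ 0 := by
    by_contra! hm
    have hblow : Tendsto (fun ρ => ρ * π (g ρ)) atTop atTop :=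
      tendsto_id.atTop_mul_pos (hπpos m hm) ((hπc.tendsto m).comp hg)
    exact not_tendsto_atTop_of_tendsto_nhds hf (hblow.congr' (hfg.mono fun _ h => h.symm))
  rcases hm.eq_or_lt with rfl | hm
  · simpa using hL
  · have hf0 : ∀ᶠ ρ in atTop, f ρ = 0 := by
      filter_upwards [hfg, hg.eventually (eventually_lt_nhds hm)] with ρ hρ hgρ
      rw [hρ, hπ0 _ hgρ.le, mul_zero]
    rw [tendsto_nhds_unique hf (tendsto_const_nhds.congr' (hf0.mono fun _ h => h.symm))]
    simpa using hm.le

theorem PenaltyTerm.nonneg (P : PenaltyTerm N) (i : Fin N) (y : ℝ) : 0 ≤ P.π i y :=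
  (le_or_gt y 0).elim (fun h => (P.eq_zero i y h).ge) fun h => (P.pos i y h).le

noncomputable def hjbMax (𝔄 : ℝ → Matrix (Fin N) (Fin N) ℝ) (𝔅 : ℝ → Fin N → ℝ) (U : Set ℝ)
    (z : Fin N → ℝ) : Fin N → ℝ :=
  fun i => sSup ((fun u => (𝔄 u *ᵥ z - 𝔅 u) i) '' U)

section HJB

variable {𝔄 : ℝ → Matrix (Fin N) (Fin N) ℝ} {𝔅 : ℝ → Fin N → ℝ} {U : Set ℝ}

theorem continuousOn_mulVec_sub_apply (hA : ContinuousOn 𝔄 U) (hB : ContinuousOn 𝔅 U)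
    (z : Fin N → ℝ) (i : Fin N) : ContinuousOn (fun u => (𝔄 u *ᵥ z - 𝔅 u) i) U := by
  rw [continuousOn_iff_continuous_domRestrict] at hA hB ⊢
  exact (continuous_apply i).comp ((hA.matrix_mulVec continuous_const).sub hB)

theorem le_hjbMax (hU : IsCompact U) (hA : ContinuousOn 𝔄 U) (hB : ContinuousOn 𝔅 U)
    (z : Fin N → ℝ) (i : Fin N) {u : ℝ} (hu : u ∈ U) : (𝔄 u *ᵥ z - 𝔅 u) i ≤ hjbMax 𝔄 𝔅 U z i :=
  le_csSup (hU.image_of_continuousOn (continuousOn_mulVec_sub_apply hA hB z i)).bddAbove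
    (mem_image_of_mem _ hu)

theorem exists_eq_hjbMax (hU : IsCompact U) (hU0 : U.Nonempty) (hA : ContinuousOn 𝔄 U)
    (hB : ContinuousOn 𝔅 U) (z : Fin N → ℝ) (i : Fin N) :
    ∃ u ∈ U, (𝔄 u *ᵥ z - 𝔅 u) i = hjbMax 𝔄 𝔅 U z i :=
  (hU.image_of_continuousOn (continuousOn_mulVec_sub_apply hA hB z i)).sSup_mem (hU0.image _)

theorem continuous_hjbMax (hU : IsCompact U) (hA : ContinuousOn 𝔄 U) (hB : ContinuousOn 𝔅 U) :
    Continuous (hjbMax 𝔄 𝔅 U) := by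
  rw [continuousOn_iff_continuous_domRestrict] at hA hB
  refine continuous_pi fun i => ?_
  have hcont : Continuous ↿(fun z (u : U) => (𝔄 u *ᵥ z - 𝔅 u) i) :=
    (continuous_apply i).comp (((hA.comp continuous_snd).matrix_mulVec continuous_fst).sub
      (hB.comp continuous_snd))
  convert (isCompact_iff_isCompact_univ.1 hU).continuous_sSup hcont using 2 with z
  rw [image_univ]
  exact congrArg sSup (image_eq_range _ _)

theorem hjbMax_lt_of_isMax (hU : IsCompact U) (hU0 : U.Nonempty) (hA : ContinuousOn 𝔄 U)
    (hB : ContinuousOn 𝔅 U) (hKo : ∀ u ∈ U, KoMat (𝔄 u)) {z₁ z₂ : Fin N → ℝ} {i : Fin N}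
    (hmax : ∀ j, (z₁ - z₂) j ≤ (z₁ - z₂) i) (hpos : 0 < (z₁ - z₂) i) :
    hjbMax 𝔄 𝔅 U z₂ i < hjbMax 𝔄 𝔅 U z₁ i := by
  obtain ⟨u, hu, hmax₂⟩ := exists_eq_hjbMax hU hU0 hA hB z₂ i
  have hsplit : (𝔄 u *ᵥ z₁ - 𝔅 u) i = (𝔄 u *ᵥ z₂ - 𝔅 u) i + (𝔄 u *ᵥ (z₁ - z₂)) i := by
    simp only [mulVec_sub, Pi.sub_apply]
    ring
  calc hjbMax 𝔄 𝔅 U z₂ i < (𝔄 u *ᵥ z₁ - 𝔅 u) i := by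
        linarith [(hKo u hu).mulVec_pos_of_isMax hmax hpos]
    _ ≤ hjbMax 𝔄 𝔅 U z₁ i := le_hjbMax hU hA hB z₁ i hu

variable {At : Matrix (Fin N) (Fin N) ℝ} {bt : Fin N → ℝ}

theorem exists_const_supersolution (hU : IsCompact U) (hA : ContinuousOn 𝔄 U)
    (hB : ContinuousOn 𝔅 U) {u₀ : ℝ} (hu₀ : u₀ ∈ U) (hKo₀ : KoMat (𝔄 u₀)) (hAt : KoMat At) :
    ∃ t : ℝ, 0 ≤ hjbMax 𝔄 𝔅 U (fun _ => t) ∧ bt ≤ At *ᵥ fun _ => t := by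
  obtain ⟨t, h₀, ht⟩ :=
    ((hKo₀.eventually_le_mulVec_const (𝔅 u₀)).and (hAt.eventually_le_mulVec_const bt)).exists
  exact ⟨t, fun i => (sub_nonneg.2 (h₀ i)).trans (le_hjbMax hU hA hB _ i hu₀), ht⟩

theorem le_of_penalised_sub_super (hU : IsCompact U) (hU0 : U.Nonempty) (hA : ContinuousOn 𝔄 U)
    (hB : ContinuousOn 𝔅 U) (hKo : ∀ u ∈ U, KoMat (𝔄 u)) (hAt : KoMat At) (P : PenaltyTerm N)
    {ρ₁ ρ₂ : ℝ} (hρ₂ : 0 ≤ ρ₂) (hρ : ρ₁ ≤ ρ₂) {z₁ z₂ : Fin N → ℝ}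
    (hsub : ∀ i, hjbMax 𝔄 𝔅 U z₁ i ≤ ρ₁ * P.π i ((bt - At *ᵥ z₁) i))
    (hsuper : ∀ i, ρ₂ * P.π i ((bt - At *ᵥ z₂) i) ≤ hjbMax 𝔄 𝔅 U z₂ i) : z₁ ≤ z₂ := by
  by_contra hle
  obtain ⟨j, hj⟩ : ∃ j, z₂ j < z₁ j := by simpa [Pi.le_def] using hle
  obtain ⟨i, -, hmaxi⟩ := Finset.exists_max_image Finset.univ (z₁ - z₂) ⟨j, Finset.mem_univ j⟩
  have hmax : ∀ k, (z₁ - z₂) k ≤ (z₁ - z₂) i := fun k => hmaxi k (Finset.mem_univ k)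
  have hpos : 0 < (z₁ - z₂) i := lt_of_lt_of_le (sub_pos.2 hj) (hmax j)
  have hobst : (bt - At *ᵥ z₁) i ≤ (bt - At *ᵥ z₂) i := by
    have := hAt.mulVec_pos_of_isMax hmax hpos
    simp only [mulVec_sub, Pi.sub_apply] at this ⊢
    linarith
  refine (hjbMax_lt_of_isMax hU hU0 hA hB hKo hmax hpos).not_ge ?_
  calc hjbMax 𝔄 𝔅 U z₁ i ≤ ρ₁ * P.π i ((bt - At *ᵥ z₁) i) := hsub i
    _ ≤ ρ₂ * P.π i ((bt - At *ᵥ z₁) i) := mul_le_mul_of_nonneg_right hρ (P.nonneg i _)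
    _ ≤ ρ₂ * P.π i ((bt - At *ᵥ z₂) i) := mul_le_mul_of_nonneg_left (P.mono i hobst) hρ₂
    _ ≤ hjbMax 𝔄 𝔅 U z₂ i := hsuper i

end HJB

theorem penalised_obstacle_convergence_general
    (N : ℕ) (a b : ℝ) (hab : a ≤ b)
    (𝔄 : ℝ → Matrix (Fin N) (Fin N) ℝ) (𝔅 : ℝ → (Fin N → ℝ))
    (hAcont : ContinuousOn 𝔄 (Set.Icc a b)) (hbcont : ContinuousOn 𝔅 (Set.Icc a b))
    (hKo : ∀ u ∈ Set.Icc a b, KoMat (𝔄 u))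
    (At : Matrix (Fin N) (Fin N) ℝ) (bt : Fin N → ℝ) (hAt : KoMat At)
    (P : PenaltyTerm N) (z : ℝ → (Fin N → ℝ))
    (hz : ∀ ρ > (0:ℝ), PenObstEq 𝔄 𝔅 (Set.Icc a b) At bt P ρ (z ρ)) :
    ∃ zstar : Fin N → ℝ,
      Tendsto z atTop (nhds zstar) ∧
      ∀ i : Fin N,
        min (sSup ((fun u => (𝔄 u *ᵥ zstar - 𝔅 u) i) '' Set.Icc a b))
          ((At *ᵥ zstar - bt) i) = 0 := by
  have hU : IsCompact (Icc a b) := isCompact_Icc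
  have ha : a ∈ Icc a b := left_mem_Icc.2 hab
  have hsol : ∀ ρ > 0, ∀ i, hjbMax 𝔄 𝔅 (Icc a b) (z ρ) i = ρ * P.π i ((bt - At *ᵥ z ρ) i) :=
    fun ρ hρ i => sub_eq_zero.1 (hz ρ hρ i)
  have hpos : ∀ ρ ∈ Ici (1 : ℝ), 0 < ρ := fun _ h => zero_lt_one.trans_le h
  have hmono : MonotoneOn z (Ici 1) := fun ρ₁ h₁ ρ₂ h₂ h =>
    le_of_penalised_sub_super hU ⟨a, ha⟩ hAcont hbcont hKo hAt P (hpos ρ₂ h₂).le h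
      (fun i => (hsol ρ₁ (hpos ρ₁ h₁) i).le) (fun i => (hsol ρ₂ (hpos ρ₂ h₂) i).ge)
  obtain ⟨t, ht₀, ht⟩ := exists_const_supersolution (bt := bt) hU hAcont hbcont ha (hKo a ha) hAt
  have hbdd : BddAbove (z '' Ici 1) := by
    refine ⟨fun _ => t, forall_mem_image.2 fun ρ hρ => ?_⟩
    refine le_of_penalised_sub_super hU ⟨a, ha⟩ hAcont hbcont hKo hAt P (hpos ρ hρ).le le_rfl
      (fun i => (hsol ρ (hpos ρ hρ) i).le) fun i => ?_
    rw [P.eq_zero i ((bt - At *ᵥ fun _ => t) i) (sub_nonpos.2 (ht i)), mul_zero]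
    exact ht₀ i
  obtain ⟨zstar, hlim⟩ := exists_tendsto_atTop_of_monotoneOn_Ici hmono hbdd
  refine ⟨zstar, hlim, fun i => ?_⟩
  have hF : Continuous fun x => hjbMax 𝔄 𝔅 (Icc a b) x i :=
    (continuous_apply i).comp (continuous_hjbMax hU hAcont hbcont)
  have hG : Continuous fun x => (bt - At *ᵥ x) i := by fun_prop
  simpa [hjbMax] using min_neg_eq_zero_of_eventually_eq_mul_penalty (P.cont i) (P.eq_zero i)
    (P.pos i) ((hF.tendsto zstar).comp hlim) ((hG.tendsto zstar).comp hlim)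
    ((eventually_gt_atTop 0).mono fun ρ hρ => hsol ρ hρ i)

/-- As `ρ → ∞`, solutions `z_ρ` of the penalised obstacle equation converge to
a limit `z*` which solves the discrete HJB obstacle problem. -/
theorem penalised_obstacle_convergence
    (N : ℕ) (hN : 0 < N) (a b : ℝ) (hab : a ≤ b)
    (𝔄 : ℝ → Matrix (Fin N) (Fin N) ℝ) (𝔅 : ℝ → (Fin N → ℝ))
    (hAcont : ContinuousOn 𝔄 (Set.Icc a b)) (hbcont : ContinuousOn 𝔅 (Set.Icc a b))
    (hKo : ∀ u ∈ Set.Icc a b, KoMat (𝔄 u))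
    (At : Matrix (Fin N) (Fin N) ℝ) (bt : Fin N → ℝ) (hAt : KoMat At)
    (P : PenaltyTerm N) (z : ℝ → (Fin N → ℝ))
    (hz : ∀ ρ > (0:ℝ), PenObstEq 𝔄 𝔅 (Set.Icc a b) At bt P ρ (z ρ)) :
    ∃ zstar : Fin N → ℝ,
      Tendsto z atTop (nhds zstar) ∧
      ∀ i : Fin N,
        min (sSup ((fun u => (𝔄 u *ᵥ zstar - 𝔅 u) i) '' Set.Icc a b))
          ((At *ᵥ zstar - bt) i) = 0 :=
  penalised_obstacle_convergence_general N a b hab 𝔄 𝔅 hAcont hbcont hKo At bt hAt P z hz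
end

section
/- For every ρ > 0 there exists a (unique) z_ρ ∈ ℝ^N satisfying the penalised obstacle equation with penalty term Π(y) = max{y,0}: max_{u∈U}{A_u z_ρ − b_u} − ρ·max{b̃ − Ãz_ρ , 0} = 0, i.e. for every component i one has max_{u∈U}(A_u z_ρ − b_u)_i − ρ·max{(b̃ − Ãz_ρ)_i , 0} = 0. -/
/-!
Put `E(z)_i = max_u (A_u z - b_u)_i - ρ max((b̃ - Ãz)_i, 0)`. For any `z, w` there are `u ∈ U`
and `θ ∈ [0, 1]` with `E(z)_i - E(w)_i = ((A_u + ρθ Ã)(z - w))_i`: the difference of the two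
maxima lies between the values of `u ↦ (A_u (z - w))_i` at the two maximisers, hence is such a
value by the intermediate value theorem on the interval `U`, and `max(·, 0)` is monotone and
`1`-Lipschitz. By compactness the matrices `A_u + ρθ Ã` have diagonal entries at most some `C`
and row dominance margin `a_ii - Σ_{j≠i} |a_ij|` at least some `δ > 0`, uniformly. Hence
`z ↦ z - C⁻¹ E(z)` is a contraction for `‖·‖∞` with constant `1 - δ / C`, and its unique fixed
point is the unique zero of `E`.
-/

open Matrix Filter

open Set Finset

section RowGap

variable {ι : Type*} [Fintype ι] [DecidableEq ι]

def rowGap (A : Matrix ι ι ℝ) (i : ι) : ℝ :=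
  A i i - ∑ j ∈ univ.erase i, |A i j|

lemma KoMat.rowGap_pos {N : ℕ} {A : Matrix (Fin N) (Fin N) ℝ} (hA : KoMat A) (i : Fin N) :
    0 < rowGap A i :=
  sub_pos.2 (hA.2 i)

lemma continuous_rowGap (i : ι) : Continuous fun A : Matrix ι ι ℝ => rowGap A i := by
  unfold rowGap
  fun_prop

lemma rowGap_le_diag (A : Matrix ι ι ℝ) (i : ι) : rowGap A i ≤ A i i :=
  sub_le_self _ (sum_nonneg fun _ _ => abs_nonneg _)

lemma le_rowGap_add_smul (A B : Matrix ι ι ℝ) {t : ℝ} (ht : 0 ≤ t) (i : ι) :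
    rowGap A i + t * rowGap B i ≤ rowGap (A + t • B) i := by
  have hsum : ∑ j ∈ univ.erase i, |A i j + t * B i j| ≤
      ∑ j ∈ univ.erase i, |A i j| + t * ∑ j ∈ univ.erase i, |B i j| := by
    rw [mul_sum, ← sum_add_distrib]
    gcongr with j
    calc |A i j + t * B i j| ≤ |A i j| + |t * B i j| := abs_add_le _ _
      _ = |A i j| + t * |B i j| := by rw [abs_mul, abs_of_nonneg ht]
  simp only [rowGap, Matrix.add_apply, Matrix.smul_apply, smul_eq_mul]
  linarith

lemma abs_sub_mul_mulVec_apply_le (A : Matrix ι ι ℝ) (d : ι → ℝ) (i : ι) {c δ : ℝ}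
    (hc : 0 ≤ c) (hcA : c * A i i ≤ 1) (hδ : δ ≤ rowGap A i) :
    |d i - c * (A *ᵥ d) i| ≤ (1 - c * δ) * ‖d‖ := by
  set R := ∑ j ∈ univ.erase i, A i j * d j
  have hR : |R| ≤ (∑ j ∈ univ.erase i, |A i j|) * ‖d‖ := by
    rw [sum_mul]
    refine (abs_sum_le_sum_abs _ _).trans (sum_le_sum fun j _ => ?_)
    rw [abs_mul]
    exact mul_le_mul_of_nonneg_left (norm_le_pi_norm d j) (abs_nonneg _)
  have hmulVec : (A *ᵥ d) i = A i i * d i + R := (add_sum_erase _ _ (mem_univ i)).symm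
  calc |d i - c * (A *ᵥ d) i| = |(1 - c * A i i) * d i - c * R| := by rw [hmulVec]; congr 1; ring
    _ ≤ |(1 - c * A i i) * d i| + |c * R| := abs_sub _ _
    _ ≤ (1 - c * A i i) * ‖d‖ + c * ((∑ j ∈ univ.erase i, |A i j|) * ‖d‖) := by
      rw [abs_mul, abs_mul, abs_of_nonneg (sub_nonneg.2 hcA), abs_of_nonneg hc]
      gcongr
      · exact norm_le_pi_norm d i
    _ = (1 - c * rowGap A i) * ‖d‖ := by rw [rowGap]; ring
    _ ≤ (1 - c * δ) * ‖d‖ := by gcongr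

end RowGap

lemma exists_mem_Icc_max_zero_sub_max_zero (p q : ℝ) :
    ∃ θ ∈ Icc (0 : ℝ) 1, max p 0 - max q 0 = θ * (p - q) := by
  wlog hqp : q < p generalizing p q
  · rcases (not_lt.1 hqp).eq_or_lt with rfl | hpq
    · exact ⟨0, left_mem_Icc.2 zero_le_one, by simp⟩
    · obtain ⟨θ, hθ, h⟩ := this q p hpq
      exact ⟨θ, hθ, by linarith⟩
  have hpos : 0 < p - q := sub_pos.2 hqp
  refine ⟨(max p 0 - max q 0) / (p - q), ⟨div_nonneg ?_ hpos.le, (div_le_one hpos).2 ?_⟩,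
    (div_mul_cancel₀ _ hpos.ne').symm⟩
  · exact sub_nonneg.2 (max_le_max_right 0 hqp.le)
  · simpa [abs_of_pos hpos] using (le_abs_self _).trans (abs_max_sub_max_le_abs p q 0)

section Compact

variable {X : Type*} [TopologicalSpace X] {U : Set X}

lemma IsCompact.exists_sSup_image_sub_sSup_image_eq (hU : IsCompact U)
    (hU' : IsPreconnected U) (hne : U.Nonempty) {f g : X → ℝ} (hf : ContinuousOn f U)
    (hg : ContinuousOn g U) : ∃ u ∈ U, sSup (f '' U) - sSup (g '' U) = f u - g u := by
  obtain ⟨u₁, hu₁, hf₁⟩ := hU.exists_isMaxOn hne hf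
  obtain ⟨u₂, hu₂, hg₂⟩ := hU.exists_isMaxOn hne hg
  rw [IsGreatest.csSup_eq ⟨mem_image_of_mem f hu₁, forall_mem_image.2 hf₁⟩,
    IsGreatest.csSup_eq ⟨mem_image_of_mem g hu₂, forall_mem_image.2 hg₂⟩]
  have hf₁₂ : f u₂ ≤ f u₁ := hf₁ hu₂
  have hg₁₂ : g u₁ ≤ g u₂ := hg₂ hu₁
  obtain ⟨u, hu, h⟩ := hU'.intermediate_value hu₂ hu₁ (hf.sub hg)
    (⟨by linarith, by linarith⟩ : f u₁ - g u₂ ∈ Icc (f u₂ - g u₂) (f u₁ - g u₁))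
  exact ⟨u, hu, h.symm⟩

variable {ι : Type*} [Finite ι] {f : ι → X → ℝ}

lemma IsCompact.exists_forall_le_of_continuousOn (hU : IsCompact U)
    (hf : ∀ i, ContinuousOn (f i) U) : ∃ C, ∀ i, ∀ u ∈ U, f i u ≤ C := by
  obtain ⟨C, hC⟩ := (isCompact_iUnion fun i => hU.image_of_continuousOn (hf i)).bddAbove
  exact ⟨C, fun i u hu => hC (mem_iUnion.2 ⟨i, mem_image_of_mem _ hu⟩)⟩

lemma IsCompact.exists_pos_forall_le_of_continuousOn (hU : IsCompact U)
    (hf : ∀ i, ContinuousOn (f i) U) (hpos : ∀ i, ∀ u ∈ U, 0 < f i u) :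
    ∃ δ > 0, ∀ i, ∀ u ∈ U, δ ≤ f i u := by
  obtain ⟨δ, hδ, h⟩ := (isCompact_iUnion fun i => hU.image_of_continuousOn (hf i)).exists_forall_le'
    continuousOn_id (a := 0) fun y hy => by
      obtain ⟨i, u, hu, rfl⟩ := mem_iUnion.1 hy
      exact hpos i u hu
  exact ⟨δ, hδ, fun i u hu => h _ (mem_iUnion.2 ⟨i, mem_image_of_mem _ hu⟩)⟩

end Compact

lemma existsUnique_eq_zero_of_contractingWith {E : Type*} [NormedAddCommGroup E] [Module ℝ E]
    [CompleteSpace E] {F : E → E} {c : ℝ} (hc : c ≠ 0) {K : NNReal}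
    (hF : ContractingWith K fun z => z - c • F z) : ∃! z, F z = 0 := by
  have hfixed : ∀ z, Function.IsFixedPt (fun z => z - c • F z) z ↔ F z = 0 := fun z => by
    rw [Function.IsFixedPt, sub_eq_self, smul_eq_zero_iff_right hc]
  exact ⟨_, (hfixed _).1 hF.fixedPoint_isFixedPt,
    fun z hz => hF.fixedPoint_unique ((hfixed z).2 hz)⟩

section PenalisedResidual

variable {X ι : Type*} [TopologicalSpace X] [Fintype ι] {U : Set X}
  {A : X → Matrix ι ι ℝ} {b : X → ι → ℝ} {At : Matrix ι ι ℝ} {bt : ι → ℝ} {ρ : ℝ}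

variable (U A b At bt ρ) in
noncomputable def penalisedResidual (z : ι → ℝ) : ι → ℝ :=
  fun i => sSup ((fun u => (A u *ᵥ z - b u) i) '' U) - ρ * max ((bt - At *ᵥ z) i) 0

lemma exists_penalisedResidual_sub_eq (hU : IsCompact U) (hU' : IsPreconnected U)
    (hne : U.Nonempty) (hA : ContinuousOn A U) (hb : ContinuousOn b U) (z w : ι → ℝ) (i : ι) :
    ∃ u ∈ U, ∃ θ ∈ Icc (0 : ℝ) 1,
      penalisedResidual U A b At bt ρ z i - penalisedResidual U A b At bt ρ w i =
        ((A u + (ρ * θ) • At) *ᵥ (z - w)) i := by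
  have hcont : ∀ y : ι → ℝ, ContinuousOn (fun u => (A u *ᵥ y - b u) i) U := fun y => by
    fun_prop
  obtain ⟨u, hu, hsup⟩ := hU.exists_sSup_image_sub_sSup_image_eq hU' hne (hcont z) (hcont w)
  obtain ⟨θ, hθ, hmax⟩ :=
    exists_mem_Icc_max_zero_sub_max_zero ((bt - At *ᵥ z) i) ((bt - At *ᵥ w) i)
  refine ⟨u, hu, θ, hθ, ?_⟩
  simp only [penalisedResidual, add_mulVec, smul_mulVec, mulVec_sub, Pi.add_apply,
    Pi.sub_apply, Pi.smul_apply, smul_eq_mul] at hsup hmax ⊢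
  linear_combination hsup - ρ * hmax

lemma contractingWith_sub_smul_penalisedResidual [DecidableEq ι] (hU : IsCompact U)
    (hU' : IsPreconnected U) (hne : U.Nonempty) (hA : ContinuousOn A U) (hb : ContinuousOn b U)
    (hρ : 0 ≤ ρ) (hAt : ∀ i, 0 ≤ rowGap At i) {δ C : ℝ} (hδ : 0 < δ) (hδC : δ ≤ C)
    (hgap : ∀ i, ∀ u ∈ U, δ ≤ rowGap (A u) i) (hdiag : ∀ i, ∀ u ∈ U, A u i i + ρ * At i i ≤ C) :
    ContractingWith (1 - δ / C).toNNReal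
      fun z => z - C⁻¹ • penalisedResidual U A b At bt ρ z := by
  have hC : 0 < C := hδ.trans_le hδC
  have hK : 0 ≤ 1 - δ / C := sub_nonneg.2 ((div_le_one hC).2 hδC)
  refine ⟨Real.toNNReal_lt_one.2 (by linarith [div_pos hδ hC]),
    LipschitzWith.of_dist_le' fun z w => ?_⟩
  rw [dist_eq_norm, dist_eq_norm,
    pi_norm_le_iff_of_nonneg (mul_nonneg hK (norm_nonneg _))]
  intro i
  obtain ⟨u, hu, θ, hθ, hE⟩ := exists_penalisedResidual_sub_eq (At := At) (bt := bt) (ρ := ρ)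
    hU hU' hne hA hb z w i
  set B := A u + (ρ * θ) • At
  have hρθ : 0 ≤ ρ * θ := mul_nonneg hρ hθ.1
  have hBdiag : C⁻¹ * B i i ≤ 1 := by
    have hθAt : ρ * θ * At i i ≤ ρ * At i i :=
      mul_le_mul_of_nonneg_right (mul_le_of_le_one_right hρ hθ.2)
        ((hAt i).trans (rowGap_le_diag At i))
    rw [inv_mul_le_one₀ hC]
    simp only [B, Matrix.add_apply, Matrix.smul_apply, smul_eq_mul]
    linarith [hdiag i u hu]
  have hBgap : δ ≤ rowGap B i := by
    linarith [le_rowGap_add_smul (A u) At hρθ i, mul_nonneg hρθ (hAt i), hgap i u hu]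
  have hdiff : (z - C⁻¹ • penalisedResidual U A b At bt ρ z -
      (w - C⁻¹ • penalisedResidual U A b At bt ρ w)) i = (z - w) i - C⁻¹ * (B *ᵥ (z - w)) i := by
    rw [← hE]
    simp only [Pi.sub_apply, Pi.smul_apply, smul_eq_mul]
    ring
  rw [hdiff, Real.norm_eq_abs, div_eq_inv_mul]
  exact abs_sub_mul_mulVec_apply_le B (z - w) i (inv_nonneg.2 hC.le) hBdiag hBgap

end PenalisedResidual

theorem penalised_obstacle_max_penalty_exists_unique_general
    (N : ℕ) (a b : ℝ) (hab : a ≤ b)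
    (𝔄 : ℝ → Matrix (Fin N) (Fin N) ℝ) (𝔅 : ℝ → (Fin N → ℝ))
    (hAcont : ContinuousOn 𝔄 (Set.Icc a b)) (hbcont : ContinuousOn 𝔅 (Set.Icc a b))
    (hKo : ∀ u ∈ Set.Icc a b, KoMat (𝔄 u))
    (At : Matrix (Fin N) (Fin N) ℝ) (bt : Fin N → ℝ) (hAt : KoMat At)
    (ρ : ℝ) (hρ : 0 < ρ) :
    ∃! z : Fin N → ℝ,
      ∀ i : Fin N,
        sSup ((fun u => (𝔄 u *ᵥ z - 𝔅 u) i) '' Set.Icc a b) -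
          ρ * max ((bt - At *ᵥ z) i) 0 = 0 := by
  obtain ⟨δ, hδ, hgap⟩ := isCompact_Icc.exists_pos_forall_le_of_continuousOn
    (fun i => (continuous_rowGap i).comp_continuousOn hAcont)
    (fun i u hu => (hKo u hu).rowGap_pos i)
  obtain ⟨C, hdiag⟩ := isCompact_Icc.exists_forall_le_of_continuousOn
    (f := fun i u => 𝔄 u i i + ρ * At i i) (fun i => by fun_prop)
  have hδC : δ ≤ max C δ := le_max_right C δ
  have hcontr := contractingWith_sub_smul_penalisedResidual (bt := bt) isCompact_Icc
    isPreconnected_Icc (nonempty_Icc.2 hab) hAcont hbcont hρ.le (fun i => (hAt.rowGap_pos i).le)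
    hδ hδC hgap (fun i u hu => (hdiag i u hu).trans (le_max_left C δ))
  simpa only [penalisedResidual, funext_iff, Pi.zero_apply] using
    existsUnique_eq_zero_of_contractingWith (inv_ne_zero (hδ.trans_le hδC).ne') hcontr

/-- For every `ρ > 0`, the penalised obstacle equation with penalty term
`Π(y) = max{y,0}` has a unique solution; the componentwise maximum over the
compact set `U` is expressed via `sSup` of the image. -/
theorem penalised_obstacle_max_penalty_exists_unique
    (N : ℕ) (hN : 0 < N) (a b : ℝ) (hab : a ≤ b)
    (𝔄 : ℝ → Matrix (Fin N) (Fin N) ℝ) (𝔅 : ℝ → (Fin N → ℝ))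
    (hAcont : ContinuousOn 𝔄 (Set.Icc a b)) (hbcont : ContinuousOn 𝔅 (Set.Icc a b))
    (hKo : ∀ u ∈ Set.Icc a b, KoMat (𝔄 u))
    (At : Matrix (Fin N) (Fin N) ℝ) (bt : Fin N → ℝ) (hAt : KoMat At)
    (ρ : ℝ) (hρ : 0 < ρ) :
    ∃! z : Fin N → ℝ,
      ∀ i : Fin N,
        sSup ((fun u => (𝔄 u *ᵥ z - 𝔅 u) i) '' Set.Icc a b) -
          ρ * max ((bt - At *ᵥ z) i) 0 = 0 :=
  penalised_obstacle_max_penalty_exists_unique_general N a b hab 𝔄 𝔅 hAcont hbcont hKo At bt hAt ρ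
    hρ
end
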